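/- Let C be a category and let F, G : C^op → Cat be (strict) functors to the category of small categories. For a morphism β : c → d in C write β* : F(d) → F(c) (resp. β* : G(d) → G(c)) for the functor F(β) (resp. G(β)). Suppose α : G ⟶ F is a natural transformation such that for every object c of C the component functor α_c : G(c) → F(c) admits a left adjoint L_c : F(c) → G(c). Let R : ∫_C G → ∫_C F denote the integrated functor which sends an object (c, A) to (c, α_c(A)) and a morphism (β, f) : (c, A) → (d, B) — consisting of β : c → d in C and f : A → β*B in G(c) — to the pair (β, α_c(A) → α_c(β*B) ≅ β*(α_d(B))), where the isomorphism comes from the naturality of α. Then R admits a left adjoint L : ∫_C F → ∫_C G; on objects, L sends (c, X) to (c, L_c(X)), and on a morphism (β, g) : (c, X) → (d, Y) it is given by the pair (β, g̃), where g̃ : L_c(X) → β*(L_d(Y)) is the adjoint of the composite X → β*Y → β*(α_d L_d(Y)) ≅ α_c(β* L_d(Y)) (the second map being β* applied to the unit of L_d ⊣ α_d). -/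

import Mathlib

/-!
Statement 0: Given strict functors `F G : Cᵒᵖ ⥤ Cat` and a natural transformation
`α : G ⟶ F` all of whose components admit left adjoints, the integrated functor
`R : ∫ G ⥤ ∫ F` between the contravariant Grothendieck constructions (sending
`(c, A)` to `(c, α_c A)`) admits a left adjoint `L`, which on objects sends
`(c, X)` to `(c, L_c X)`.
-/

open CategoryTheory Opposite

universe v₂ u₂ v₁ u₁

namespace ContraGrothendieckAdjunction

/-- The functor `Cat ⥤ Cat` sending a category to its opposite category and a functor to
its opposite functor. -/
def catOp : Cat.{v₂, u₂} ⥤ Cat.{v₂, u₂} where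
  obj C := Cat.of Cᵒᵖ
  map F := (Functor.op F.toFunctor).toCatHom

variable {C : Type u₁} [Category.{v₁} C]

/-- The contravariant Grothendieck construction `∫_C F` of a (strict) functor
`F : Cᵒᵖ ⥤ Cat`: its objects are pairs `(c, X)` with `c : C` and `X : F c`, and a morphism
`(c, X) ⟶ (d, Y)` is a pair `(β, g)` with `β : c ⟶ d` in `C` and `g : X ⟶ β* Y` in `F c`,
where `β* = F.map β.op`.  It is realized here as the opposite category of the (covariant)
Grothendieck construction of `F ⋙ catOp : Cᵒᵖ ⥤ Cat`. -/
def ContraGrothendieck (F : Cᵒᵖ ⥤ Cat.{v₂, u₂}) : Type max u₁ u₂ :=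
  (Grothendieck (F ⋙ catOp))ᵒᵖ

instance (F : Cᵒᵖ ⥤ Cat.{v₂, u₂}) : Category (ContraGrothendieck F) :=
  inferInstanceAs (Category (Grothendieck (F ⋙ catOp))ᵒᵖ)

/-- The object of the contravariant Grothendieck construction `∫_C F` corresponding to a
pair `(c, X)` with `X : F c`. -/
def ContraGrothendieck.mk (F : Cᵒᵖ ⥤ Cat.{v₂, u₂}) (c : Cᵒᵖ) (X : F.obj c) :
    ContraGrothendieck F :=
  op ⟨c, show (F ⋙ catOp).obj c from op X⟩

/-- The integrated functor `R : ∫_C G ⥤ ∫_C F` associated to a natural transformation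
`α : G ⟶ F`: it sends an object `(c, A)` to `(c, α_c A)`, and a morphism
`(β, f : A ⟶ β* B)` to `(β, α_c A ⟶ α_c (β* B) = β* (α_d B))`, the identification coming
from the (strict) naturality of `α`. -/
def integrated {F G : Cᵒᵖ ⥤ Cat.{v₂, u₂}} (α : G ⟶ F) :
    ContraGrothendieck G ⥤ ContraGrothendieck F :=
  (Grothendieck.map (Functor.whiskerRight α catOp)).op

end ContraGrothendieckAdjunction

/-!
For `α : F ⟶ G` between functors `D ⥤ Cat` whose components have right adjoints `R c`,
`Grothendieck.map α` has a right adjoint: a morphism `(b, x) ⟶ (c, y)` out of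
`(map α).obj (b, x)` is `β : b ⟶ c` with `β_! (α_b x) = α_c (β_! x) ⟶ y`, which transposes to
`β_! x ⟶ R_c y`, i.e. a morphism `(b, x) ⟶ (c, R_c y)`. The contravariant construction is the
opposite of the covariant one for `F ⋙ catOp`, and `integrated α` is the opposite of `map` along
the fibrewise opposites `(α_c)ᵒᵖ ⊣ (L_c)ᵒᵖ`; so the opposite of that right adjoint is the
required left adjoint.
-/

namespace CategoryTheory

namespace NatTrans

variable {D : Type*} [Category D] {F G : D ⥤ Cat} (α : F ⟶ G)

lemma naturality_toFunctor_obj {b c : D} (β : b ⟶ c) (x : F.obj b) :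
    (G.map β).toFunctor.obj ((α.app b).toFunctor.obj x) =
      (α.app c).toFunctor.obj ((F.map β).toFunctor.obj x) :=
  (Functor.congr_obj congr($(α.naturality β).toFunctor) x).symm

lemma naturality_toFunctor_map {b c : D} (β : b ⟶ c) {x x' : F.obj b} (φ : x ⟶ x') :
    (G.map β).toFunctor.map ((α.app b).toFunctor.map φ) =
      eqToHom (α.naturality_toFunctor_obj β x) ≫
        (α.app c).toFunctor.map ((F.map β).toFunctor.map φ) ≫
          eqToHom (α.naturality_toFunctor_obj β x').symm := by
  simpa using Functor.congr_hom congr($(α.naturality β).toFunctor).symm φ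

end NatTrans

namespace Grothendieck

variable {D : Type*} [Category D] {F G : D ⥤ Cat} (α : F ⟶ G)
  {R : ∀ c, G.obj c ⥤ F.obj c} (adj : ∀ c, (α.app c).toFunctor ⊣ R c)

/- The source is `(map α).obj X` written out, and the fibre lemma below spells out the fibre of
`(map α).map f ≫ g`: `map` is not reducible, so terms mixing the two forms defeat `rw` and
`simp`, while `exact` still unifies them. -/
def mapHomEquiv (X : Grothendieck F) (Y : Grothendieck G) :
    (⟨X.base, (α.app X.base).toFunctor.obj X.fiber⟩ ⟶ Y) ≃
      (X ⟶ ⟨Y.base, (R Y.base).obj Y.fiber⟩) where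
  toFun f := ⟨f.base, (adj Y.base).homEquiv _ _
    (eqToHom (α.naturality_toFunctor_obj f.base X.fiber).symm ≫ f.fiber)⟩
  invFun g := ⟨g.base, eqToHom (α.naturality_toFunctor_obj g.base X.fiber) ≫
    ((adj Y.base).homEquiv _ _).symm g.fiber⟩
  left_inv f := Grothendieck.ext _ _ rfl (by simp)
  right_inv g := Grothendieck.ext _ _ rfl (by simp)

lemma mapHomEquiv_naturality_left_fiber {b' b c : D} (β : b' ⟶ b) (γ : b ⟶ c)
    {x' : F.obj b'} {x : F.obj b} {y : G.obj c} (φ : (F.map β).toFunctor.obj x' ⟶ x)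
    (ψ : (G.map γ).toFunctor.obj ((α.app b).toFunctor.obj x) ⟶ y) :
    (adj c).homEquiv _ y (eqToHom (α.naturality_toFunctor_obj (β ≫ γ) x').symm ≫
        eqToHom (by simp) ≫ (G.map γ).toFunctor.map
          ((eqToHom (α.naturality β).symm).toNatTrans.app x' ≫ (α.app b).toFunctor.map φ) ≫ ψ) =
      eqToHom (by simp) ≫ (F.map γ).toFunctor.map φ ≫
        (adj c).homEquiv _ y (eqToHom (α.naturality_toFunctor_obj γ x).symm ≫ ψ) := by
  simp [NatTrans.naturality_toFunctor_map, eqToHom_map,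
    ← Adjunction.homEquiv_naturality_left]

lemma mapHomEquiv_naturality_left {X' X : Grothendieck F} {Y : Grothendieck G} (f : X' ⟶ X)
    (g : (map α).obj X ⟶ Y) :
    mapHomEquiv α adj X' Y ((map α).map f ≫ g) = f ≫ mapHomEquiv α adj X Y g :=
  Grothendieck.ext _ _ rfl <| (Category.id_comp _).trans
    (mapHomEquiv_naturality_left_fiber α adj f.base g.base f.fiber g.fiber)

def mapAdjunction :
    map α ⊣ Adjunction.rightAdjointOfEquiv (F := map α) (mapHomEquiv α adj)
      fun _ _ _ ↦ mapHomEquiv_naturality_left α adj :=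
  Adjunction.adjunctionOfEquivRight _ _

end Grothendieck

end CategoryTheory

namespace ContraGrothendieckAdjunction

variable {C : Type u₁} [Category.{v₁} C]

/-- If every component `α_c : G c ⥤ F c` of `α : G ⟶ F` admits a left adjoint
`L_c : F c ⥤ G c`, then the integrated functor `R = integrated α : ∫_C G ⥤ ∫_C F` admits a
left adjoint `L`, which on objects sends `(c, X)` to `(c, L_c X)`. -/
theorem integrated_hasLeftAdjoint {F G : Cᵒᵖ ⥤ Cat.{v₂, u₂}} (α : G ⟶ F)
    (Ladj : ∀ c : Cᵒᵖ, (F.obj c : Cat) ⥤ (G.obj c : Cat))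
    (adj : ∀ c : Cᵒᵖ, Ladj c ⊣ ((α.app c).toFunctor : (G.obj c : Cat) ⥤ (F.obj c : Cat))) :
    ∃ L : ContraGrothendieck F ⥤ ContraGrothendieck G,
      Nonempty (L ⊣ integrated α) ∧
        ∀ (c : Cᵒᵖ) (X : F.obj c),
          L.obj (ContraGrothendieck.mk F c X) =
            ContraGrothendieck.mk G c ((Ladj c).obj X) :=
  ⟨_, ⟨(Grothendieck.mapAdjunction (Functor.whiskerRight α catOp)
    (R := fun c ↦ (Ladj c).op) fun c ↦ (adj c).op).op⟩, fun _ _ ↦ rfl⟩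

end ContraGrothendieckAdjunction
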